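/- Let v_1,...,v_n be independent nonnegative random variables. For any δ > 0 and any price vector p, define p' by p'_i = max(p_i, δ). Then the expected revenue satisfies E[R_{p'}] ≥ E[R_p] − δ. -/

import Mathlib

open MeasureTheory ProbabilityTheory

open scoped Classical in
/-- Revenue of a unit-demand buyer with valuations `v` facing prices `p`:
the buyer purchases the item `i` maximizing `v i - p i` provided `v i - p i ≥ 0`
(ties broken by smallest index), paying `p i`; revenue is `0` otherwise. -/
noncomputable def revenue {n : ℕ} (p v : Fin n → ℝ) : ℝ :=
  let S : Finset (Fin n) :=
    Finset.univ.filter (fun i => 0 ≤ v i - p i ∧ ∀ j, v j - p j ≤ v i - p i)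
  if h : S.Nonempty then p (S.min' h) else 0

/-!
Raising every price below `δ` up to `δ` can only hurt on valuation profiles where the item sold
at the old prices was priced below `δ`, and there the old revenue was already less than `δ`.
Otherwise the winning item `i` keeps its price while no other utility increases, so `i` is still
utility-maximising and, being the least such item at the old prices, also the least at the new
ones: the revenue is unchanged. The bound thus holds pointwise and integrates.
-/

section

variable {n : ℕ}

open scoped Classical in
noncomputable def demandSet (p v : Fin n → ℝ) : Finset (Fin n) :=
  Finset.univ.filter (fun i => 0 ≤ v i - p i ∧ ∀ j, v j - p j ≤ v i - p i)

noncomputable def chargedPrice (p : Fin n → ℝ) (S : Finset (Fin n)) : ℝ :=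
  if h : S.Nonempty then p (S.min' h) else 0

theorem revenue_eq_chargedPrice (p v : Fin n → ℝ) :
    revenue p v = chargedPrice p (demandSet p v) := rfl

theorem revenue_eq_min' {p v : Fin n → ℝ} (h : (demandSet p v).Nonempty) :
    revenue p v = p ((demandSet p v).min' h) :=
  dif_pos h

theorem revenue_eq_zero {p v : Fin n → ℝ} (h : ¬(demandSet p v).Nonempty) :
    revenue p v = 0 :=
  dif_neg h

theorem mem_demandSet {p v : Fin n → ℝ} {i : Fin n} :
    i ∈ demandSet p v ↔ 0 ≤ v i - p i ∧ ∀ j, v j - p j ≤ v i - p i := by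
  simp [demandSet]

section Monotone

variable {p q v : Fin n → ℝ} {i : Fin n}

theorem mem_demandSet_of_le (hpq : ∀ j, p j ≤ q j) (hi : i ∈ demandSet p v)
    (hqi : q i = p i) : i ∈ demandSet q v := by
  obtain ⟨hi0, himax⟩ := mem_demandSet.1 hi
  refine mem_demandSet.2 ⟨by rwa [hqi], fun j => ?_⟩
  linarith [himax j, hpq j]

theorem demandSet_subset_of_le (hpq : ∀ j, p j ≤ q j) (hi : i ∈ demandSet p v)
    (hqi : q i = p i) : demandSet q v ⊆ demandSet p v := by
  intro k hk
  obtain ⟨hi0, himax⟩ := mem_demandSet.1 hi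
  obtain ⟨-, hkmax⟩ := mem_demandSet.1 hk
  -- `v k - q k ≥ v i - q i = v i - p i ≥ v k - p k ≥ v k - q k`, so all are equal
  have hk_eq : v k - p k = v i - p i := by linarith [hkmax i, himax k, hpq k]
  exact mem_demandSet.2 ⟨hk_eq ▸ hi0, fun j => hk_eq ▸ himax j⟩

theorem revenue_eq_of_le (hpq : ∀ j, p j ≤ q j) (h : (demandSet p v).Nonempty)
    (hq : q ((demandSet p v).min' h) = p ((demandSet p v).min' h)) :
    revenue q v = revenue p v := by
  have hmem := mem_demandSet_of_le hpq ((demandSet p v).min'_mem h) hq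
  have hsub := demandSet_subset_of_le hpq ((demandSet p v).min'_mem h) hq
  have hmin : (demandSet q v).min' ⟨_, hmem⟩ = (demandSet p v).min' h :=
    le_antisymm (Finset.min'_le _ _ hmem) (Finset.min'_subset ⟨_, hmem⟩ hsub)
  rw [revenue_eq_min' ⟨_, hmem⟩, revenue_eq_min' h, hmin, hq]

end Monotone

theorem revenue_nonneg {p : Fin n → ℝ} (hp : ∀ i, 0 ≤ p i) (v : Fin n → ℝ) :
    0 ≤ revenue p v := by
  rw [revenue_eq_chargedPrice, chargedPrice]
  split_ifs
  exacts [hp _, le_rfl]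

theorem revenue_le_revenue_max_add (p v : Fin n → ℝ) {δ : ℝ} (hδ : 0 ≤ δ) :
    revenue p v ≤ revenue (fun i => max (p i) δ) v + δ := by
  have hq := revenue_nonneg (fun i => hδ.trans (le_max_right (p i) δ)) v
  by_cases h : (demandSet p v).Nonempty
  · set i := (demandSet p v).min' h
    have hrev : revenue p v = p i := revenue_eq_min' h
    rcases lt_or_ge (p i) δ with hlow | hhigh
    · linarith
    · rw [revenue_eq_of_le (fun j => le_max_left (p j) δ) h (max_eq_left hhigh)]
      linarith
  · linarith [revenue_eq_zero h]

theorem measurable_demandSet (p : Fin n → ℝ) : Measurable (demandSet p) := by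
  refine measurable_finset_iff.2 fun i => ?_
  simp only [mem_demandSet]
  fun_prop

theorem measurable_revenue (p : Fin n → ℝ) : Measurable (revenue p) :=
  (Measurable.of_discrete (f := chargedPrice p)).comp (measurable_demandSet p)

theorem abs_revenue_le (p v : Fin n → ℝ) : |revenue p v| ≤ ∑ j, |p j| := by
  rw [revenue_eq_chargedPrice, chargedPrice]
  split_ifs
  · exact Finset.single_le_sum (f := fun j => |p j|) (fun j _ => abs_nonneg _)
      (Finset.mem_univ _)
  · simpa using Finset.sum_nonneg fun j _ => abs_nonneg (p j)

theorem integrable_revenue {Ω : Type*} [MeasurableSpace Ω] {μ : Measure Ω} [IsFiniteMeasure μ]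
    {X : Ω → Fin n → ℝ} (hX : AEMeasurable X μ) (p : Fin n → ℝ) :
    Integrable (fun ω => revenue p (X ω)) μ :=
  .of_bound ((measurable_revenue p).comp_aemeasurable hX).aestronglyMeasurable _
    (.of_forall fun ω => abs_revenue_le p (X ω))

end

theorem raising_low_prices_loses_at_most_delta_general
    {Ω : Type*} [MeasurableSpace Ω] (μ : Measure Ω) [IsProbabilityMeasure μ]
    {n : ℕ} (V : Fin n → Ω → ℝ) (hVmeas : ∀ i, Measurable (V i))
    (δ : ℝ) (hδ : 0 < δ) (p : Fin n → ℝ) :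
    ∫ ω, revenue p (fun i => V i ω) ∂μ - δ ≤
      ∫ ω, revenue (fun i => max (p i) δ) (fun i => V i ω) ∂μ := by
  have hX : AEMeasurable (fun ω i => V i ω) μ := (measurable_pi_lambda _ hVmeas).aemeasurable
  calc ∫ ω, revenue p (fun i => V i ω) ∂μ - δ
      = ∫ ω, (revenue p (fun i => V i ω) - δ) ∂μ := by
        rw [integral_sub (integrable_revenue hX p) (integrable_const δ)]
        simp
    _ ≤ ∫ ω, revenue (fun i => max (p i) δ) (fun i => V i ω) ∂μ :=
        integral_mono ((integrable_revenue hX p).sub (integrable_const δ))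
          (integrable_revenue hX _) fun ω => by
            linarith [revenue_le_revenue_max_add p (fun i => V i ω) hδ.le]

theorem raising_low_prices_loses_at_most_delta
    {Ω : Type*} [MeasurableSpace Ω] (μ : Measure Ω) [IsProbabilityMeasure μ]
    {n : ℕ} (V : Fin n → Ω → ℝ) (hVmeas : ∀ i, Measurable (V i))
    (hindep : iIndepFun V μ)
    (hnonneg : ∀ i, ∀ᵐ ω ∂μ, 0 ≤ V i ω)
    (δ : ℝ) (hδ : 0 < δ) (p : Fin n → ℝ) :
    ∫ ω, revenue p (fun i => V i ω) ∂μ - δ ≤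
      ∫ ω, revenue (fun i => max (p i) δ) (fun i => V i ω) ∂μ :=
  raising_low_prices_loses_at_most_delta_general μ V hVmeas δ hδ p
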